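/- arXiv:2003.09904 — 2 statements merged into one kernel-verified Lean document; each statement's English description precedes it below -/
import Mathlib

section
/- For three points k'_i, k'_j, k'_k in ℝ² that are not collinear, the linear system ω_{ij}(k'_i − k'_j) + ω_{ik}(k'_i − k'_k) = v_i, ω_{ij}(k'_j − k'_i) + ω_{jk}(k'_j − k'_k) = v_j, ω_{ik}(k'_k − k'_i) + ω_{jk}(k'_k − k'_j) = v_k in the unknowns ω_{ij}, ω_{ik}, ω_{jk} ∈ ℝ has at most one solution, for any right-hand sides v_i, v_j, v_k ∈ ℝ² satisfying v_i + v_j + v_k = 0. -/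
theorem equilibrium_system_unique_solution
    (ki kj kk vi vj vk : Fin 2 → ℝ)
    (hnc : LinearIndependent ℝ ![kj - ki, kk - ki])
    (hv : vi + vj + vk = 0)
    (w w' : Fin 3 → ℝ)
    (h1 : w 0 • (ki - kj) + w 1 • (ki - kk) = vi)
    (h2 : w 0 • (kj - ki) + w 2 • (kj - kk) = vj)
    (h3 : w 1 • (kk - ki) + w 2 • (kk - kj) = vk)
    (h1' : w' 0 • (ki - kj) + w' 1 • (ki - kk) = vi)
    (h2' : w' 0 • (kj - ki) + w' 2 • (kj - kk) = vj)
    (h3' : w' 1 • (kk - ki) + w' 2 • (kk - kj) = vk) :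
    w = w' := by
  have e1 : (w 0 - w' 0) • (kj - ki) + (w 1 - w' 1) • (kk - ki) = 0 := by
    have := h1.trans h1'.symm
    have : (w 0 - w' 0) • (ki - kj) + (w 1 - w' 1) • (ki - kk) = 0 := by
      rw [sub_smul, sub_smul]; linear_combination (norm := module) this
    linear_combination (norm := module) -this
  obtain ⟨d0, d1⟩ := hnc.eq_zero_of_pair e1
  have hw0 : w 0 = w' 0 := by linarith [sub_eq_zero.mp d0]
  have hw1 : w 1 = w' 1 := by linarith [sub_eq_zero.mp d1]
  have e2 : (w 2 - w' 2) • (kj - ki) + (-(w 2 - w' 2)) • (kk - ki) = 0 := by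
    have := h2.trans h2'.symm
    rw [hw0] at this
    have h : (w 2 - w' 2) • (kj - kk) = 0 := by
      rw [sub_smul]; linear_combination (norm := module) this
    linear_combination (norm := module) h
  have d2 := (hnc.eq_zero_of_pair e2).1
  have hw2 : w 2 = w' 2 := by linarith [sub_eq_zero.mp d2]
  funext i
  fin_cases i <;> assumption
end

section
/- If the three points k'_i, k'_j, k'_k in ℝ² are collinear and the right-hand sides v_i, v_j, v_k sum to zero and lie along the common line direction, then the solution set of the equilibrium system ω_{ij}(k'_i−k'_j)+ω_{ik}(k'_i−k'_k) = v_i, ω_{ij}(k'_j−k'_i)+ω_{jk}(k'_j−k'_k) = v_j, ω_{ik}(k'_k−k'_i)+ω_{jk}(k'_k−k'_j) = v_k, if nonempty and the three points are pairwise distinct, is an affine subspace of positive dimension of ℝ³. -/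
section Equilibrium

variable {R E : Type*} [CommRing R] [AddCommGroup E] [Module R E]

/-- `w = (ω_ij, ω_ik, ω_jk)`. -/
@[simps]
def equilibriumMap (ki kj kk : E) : (Fin 3 → R) →ₗ[R] E × E × E where
  toFun w :=
    (w 0 • (ki - kj) + w 1 • (ki - kk), w 0 • (kj - ki) + w 2 • (kj - kk),
      w 1 • (kk - ki) + w 2 • (kk - kj))
  map_add' w w' := by
    simp only [Pi.add_apply, add_smul, Prod.mk_add_mk, Prod.mk.injEq]
    refine ⟨?_, ?_, ?_⟩ <;> abel
  map_smul' c w := by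
    simp only [Pi.smul_apply, smul_eq_mul, mul_smul, RingHom.id_apply, Prod.smul_mk, smul_add]

/-- For points at positions `0, α, β` on a line, `ω_ab (p_a - p_b)` is `± α β (β - α)` for every
edge `ab`, so the forces at each point cancel. -/
def collinearSelfStress (α β : R) : Fin 3 → R :=
  ![β * (α - β), -(α * (α - β)), -(α * β)]

theorem collinearSelfStress_ne_zero [NoZeroDivisors R] {α β : R} (hα : α ≠ 0) (hβ : β ≠ 0) :
    collinearSelfStress α β ≠ 0 := fun h => by
  have h2 := congrFun h 2
  simp only [collinearSelfStress, Matrix.cons_val, Pi.zero_apply, neg_eq_zero] at h2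
  exact mul_ne_zero hα hβ h2

theorem equilibriumMap_collinearSelfStress {ki kj kk : E} {α β : R}
    (hcol : β • (kj - ki) = α • (kk - ki)) :
    equilibriumMap ki kj kk (collinearSelfStress α β) = 0 := by
  simp only [equilibriumMap_apply, collinearSelfStress, Matrix.cons_val, Prod.mk_eq_zero]
  refine ⟨?_, ?_, ?_⟩
  · linear_combination (norm := module) (β - α) • hcol
  · linear_combination (norm := module) (-β) • hcol
  · linear_combination (norm := module) α • hcol

end Equilibrium

theorem equilibrium_system_collinear_positive_dim_general
    (ki kj kk vi vj vk d : Fin 2 → ℝ)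
    (hij : ki ≠ kj) (hik : ki ≠ kk)
    (hcolj : ∃ α : ℝ, kj - ki = α • d) (hcolk : ∃ β : ℝ, kk - ki = β • d)
    (S : Set (Fin 3 → ℝ))
    (hS : S = {w : Fin 3 → ℝ |
      w 0 • (ki - kj) + w 1 • (ki - kk) = vi ∧
      w 0 • (kj - ki) + w 2 • (kj - kk) = vj ∧
      w 1 • (kk - ki) + w 2 • (kk - kj) = vk})
    (hne : S.Nonempty) :
    ∃ w₀ ∈ S, ∃ u : Fin 3 → ℝ, u ≠ 0 ∧ ∀ t : ℝ, w₀ + t • u ∈ S := by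
  obtain ⟨α, hα⟩ := hcolj
  obtain ⟨β, hβ⟩ := hcolk
  have hα0 : α ≠ 0 := by
    rintro rfl
    exact hij (by simpa [sub_eq_zero, eq_comm] using hα)
  have hβ0 : β ≠ 0 := by
    rintro rfl
    exact hik (by simpa [sub_eq_zero, eq_comm] using hβ)
  have hcol : β • (kj - ki) = α • (kk - ki) := by rw [hα, hβ, smul_smul, smul_smul, mul_comm]
  have hS_preimage : S = equilibriumMap ki kj kk ⁻¹' {(vi, vj, vk)} := by
    ext w
    simp [hS, Prod.ext_iff]
  obtain ⟨w₀, hw₀⟩ := hne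
  refine ⟨w₀, hw₀, collinearSelfStress α β, collinearSelfStress_ne_zero hα0 hβ0, fun t => ?_⟩
  rw [hS_preimage] at hw₀ ⊢
  rw [Set.mem_preimage, map_add, map_smul, equilibriumMap_collinearSelfStress hcol, smul_zero,
    add_zero]
  exact hw₀

theorem equilibrium_system_collinear_positive_dim
    (ki kj kk vi vj vk d : Fin 2 → ℝ) (hd : d ≠ 0)
    (hij : ki ≠ kj) (hik : ki ≠ kk) (hjk : kj ≠ kk)
    (hcolj : ∃ α : ℝ, kj - ki = α • d) (hcolk : ∃ β : ℝ, kk - ki = β • d)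
    (hv : vi + vj + vk = 0)
    (hvi : ∃ a : ℝ, vi = a • d) (hvj : ∃ a : ℝ, vj = a • d) (hvk : ∃ a : ℝ, vk = a • d)
    (S : Set (Fin 3 → ℝ))
    (hS : S = {w : Fin 3 → ℝ |
      w 0 • (ki - kj) + w 1 • (ki - kk) = vi ∧
      w 0 • (kj - ki) + w 2 • (kj - kk) = vj ∧
      w 1 • (kk - ki) + w 2 • (kk - kj) = vk})
    (hne : S.Nonempty) :
    ∃ w₀ ∈ S, ∃ u : Fin 3 → ℝ, u ≠ 0 ∧ ∀ t : ℝ, w₀ + t • u ∈ S :=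
  equilibrium_system_collinear_positive_dim_general ki kj kk vi vj vk d hij hik hcolj hcolk S hS hne
end
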